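/- Let α > 0 and 0 < γ < 1. If A ⊆ ℕ is a C-set, i.e. A belongs to some idempotent ultrafilter on ℕ every member of which is a J-set, then g_{α,γ}[A] = {⌊αn + γ⌋ : n ∈ A} is a C-set. -/

import Mathlib

/-- The nonhomogeneous spectrum map `g_{α,γ}(n) = ⌊α n + γ⌋`. -/
noncomputable def spectrumMap (α γ : ℝ) (n : ℕ) : ℕ := ⌊α * n + γ⌋₊

/-- `B ⊆ ℕ` is a J-set. -/
def JSet (B : Set ℕ) : Prop :=
  ∀ F : Finset (ℕ → ℕ), F.Nonempty →
    ∃ (a : ℕ) (H : Finset ℕ), H.Nonempty ∧ ∀ f ∈ F, a + ∑ n ∈ H, f n ∈ B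

/-- The ultrafilter sum: `A ∈ usum p q ↔ {x : {y : x + y ∈ A} ∈ q} ∈ p`. -/
def usum (p q : Ultrafilter ℕ) : Ultrafilter ℕ :=
  p.bind fun x => q.map fun y => x + y

/-- `A ⊆ ℕ` is a C-set: a member of some idempotent ultrafilter all of whose
members are J-sets. -/
def CSet (A : Set ℕ) : Prop :=
  ∃ p : Ultrafilter ℕ, usum p p = p ∧ (∀ B ∈ p, JSet B) ∧ A ∈ p

/-!
The map `n ↦ α n` into the compact group `ℝ/ℤ` is additive, so its limit along an idempotent
ultrafilter `p` is an idempotent of `ℝ/ℤ`, i.e. `0`. Hence for `p`-almost every `b` the real `α b`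
lies within `δ` of an integer, which is then `⌊α b + γ⌋`; so `g = g_{α,γ}` is additive on a member
of `p`, and `g(p)` is again idempotent. For the J-set property, compactness of `(ℝ/ℤ)^F` yields
blocks of consecutive indices on which each `f ∈ F` sums to nearly `α N_f(r)` for integers
`N_f(r)`. The J-set property of a member `B` of `p` for the sequences `N_f` gives points `b_f ∈ B`,
and `g(b_f)` minus the sum of `f` over the chosen blocks is an integer within `1/2` of a number
independent of `f`, hence a common translate.
-/

open Filter Topology Finset

lemma Ultrafilter.mem_usum {p q : Ultrafilter ℕ} {S : Set ℕ} :
    S ∈ usum p q ↔ {x | {y | x + y ∈ S} ∈ q} ∈ p := Iff.rfl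

lemma tendsto_usum {G : Type*} [TopologicalSpace G] [Add G] [ContinuousAdd G] {φ : ℕ → G}
    (hφ : ∀ x y, φ (x + y) = φ x + φ y) {p q : Ultrafilter ℕ} {a b : G}
    (ha : Tendsto φ p (𝓝 a)) (hb : Tendsto φ q (𝓝 b)) : Tendsto φ (usum p q) (𝓝 (a + b)) := by
  intro W hW
  refine (Ultrafilter.mem_usum.2 ?_ : φ ⁻¹' W ∈ usum p q)
  obtain ⟨U, hU, V, hV, hUV⟩ := mem_nhds_prod_iff.1 (continuous_add.tendsto (a, b) hW)
  refine mem_of_superset (ha hU) fun x hx => mem_of_superset (hb hV) fun y hy => ?_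
  simpa [hφ] using hUV (Set.mk_mem_prod hx hy)

lemma eq_zero_of_tendsto_of_usum_self {G : Type*} [TopologicalSpace G] [T2Space G]
    [AddGroup G] [ContinuousAdd G] {φ : ℕ → G} (hφ : ∀ x y, φ (x + y) = φ x + φ y)
    {p : Ultrafilter ℕ} (hp : usum p p = p) {a : G} (ha : Tendsto φ p (𝓝 a)) : a = 0 := by
  have h2a : Tendsto φ p (𝓝 (a + a)) := hp ▸ tendsto_usum hφ ha ha
  exact add_eq_left.1 (tendsto_nhds_unique h2a ha)

lemma tendsto_zero_of_usum_self {G : Type*} [TopologicalSpace G] [CompactSpace G] [T2Space G]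
    [AddGroup G] [ContinuousAdd G] {φ : ℕ → G} (hφ : ∀ x y, φ (x + y) = φ x + φ y)
    {p : Ultrafilter ℕ} (hp : usum p p = p) : Tendsto φ p (𝓝 0) := by
  obtain ⟨a, -, ha⟩ := isCompact_univ.ultrafilter_le_nhds (p.map φ) (le_principal_iff.2 univ_mem)
  exact eq_zero_of_tendsto_of_usum_self hφ hp ha ▸ ha

lemma usum_map_self_of_add_eq {p : Ultrafilter ℕ} (hp : usum p p = p) {W : Set ℕ} (hW : W ∈ p)
    {g : ℕ → ℕ} (hg : ∀ x ∈ W, ∀ y ∈ W, g (x + y) = g x + g y) :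
    usum (p.map g) (p.map g) = p.map g := by
  refine Ultrafilter.coe_le_coe.1 fun S hS => ?_
  have hSW : {x | {y | x + y ∈ g ⁻¹' S ∩ W} ∈ p} ∈ p := by
    rw [← Ultrafilter.mem_usum, hp]
    exact inter_mem hS hW
  rw [Ultrafilter.mem_coe, Ultrafilter.mem_usum, Ultrafilter.mem_map]
  refine mem_of_superset (inter_mem hSW hW) fun x ⟨hx, hxW⟩ => ?_
  refine mem_of_superset (inter_mem hx hW) fun y ⟨⟨hxy, _⟩, hyW⟩ => ?_
  simpa [hg x hxW y hyW] using hxy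

lemma exists_nat_abs_sub_lt_of_norm_lt {x ε : ℝ} (hx : 0 ≤ x) (h : ‖(x : UnitAddCircle)‖ < ε) :
    ∃ k : ℕ, |x - k| < ε := by
  have hround : 0 ≤ round x := by
    rw [round_eq]
    exact Int.floor_nonneg.2 (by positivity)
  refine ⟨(round x).toNat, ?_⟩
  rwa [UnitAddCircle.norm_eq, ← Int.toNat_of_nonneg hround] at h

lemma exists_strictMono_dist_succ_lt {X : Type*} [PseudoMetricSpace X] [CompactSpace X]
    (y : ℕ → X) {ε : ℕ → ℝ} (hε : ∀ r, 0 < ε r) :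
    ∃ m : ℕ → ℕ, StrictMono m ∧ ∀ r, dist (y (m (r + 1))) (y (m r)) < ε r := by
  obtain ⟨a, -, φ, hφ, hlim⟩ := isCompact_univ.tendsto_subseq (x := y) fun _ => Set.mem_univ _
  obtain ⟨ψ, hψ, hclose⟩ := extraction_forall_of_eventually'
    (P := fun r k => ∀ k' ≥ k, dist (y (φ k')) (y (φ k)) < ε r) fun r => by
      obtain ⟨N, hN⟩ := Metric.cauchySeq_iff.1 hlim.cauchySeq (ε r) (hε r)
      exact ⟨N, fun k hk k' hk' => hN k' (hk.trans hk') k hk⟩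
  exact ⟨φ ∘ ψ, hφ.comp hψ, fun r => hclose r _ (hψ r.lt_succ_self).le⟩

lemma exists_strictMono_blockSum_near_nat (F : Finset (ℕ → ℕ)) {β : ℝ} (hβ : 0 ≤ β)
    {ε : ℕ → ℝ} (hε : ∀ r, 0 < ε r) :
    ∃ m : ℕ → ℕ, StrictMono m ∧
      ∀ f ∈ F, ∀ r, ∃ k : ℕ, |β * ∑ n ∈ Ico (m r) (m (r + 1)), (f n : ℝ) - k| < ε r := by
  obtain ⟨m, hm, hdist⟩ := exists_strictMono_dist_succ_lt
    (fun N (f : F) => ((β * ∑ n ∈ range N, (f.1 n : ℝ) : ℝ) : UnitAddCircle)) hε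
  refine ⟨m, hm, fun f hf r => exists_nat_abs_sub_lt_of_norm_lt (by positivity) ?_⟩
  have := (dist_le_pi_dist _ _ ⟨f, hf⟩).trans_lt (hdist r)
  rwa [dist_eq_norm, ← AddCircle.coe_sub, ← mul_sub,
    ← sum_Ico_eq_sub _ (hm.monotone r.le_succ)] at this

lemma sum_biUnion_Ico_succ {M : Type*} [AddCommMonoid M] {m : ℕ → ℕ} (hm : Monotone m)
    (H : Finset ℕ) (f : ℕ → M) :
    ∑ n ∈ H.biUnion (fun r => Ico (m r) (m (r + 1))), f n
      = ∑ r ∈ H, ∑ n ∈ Ico (m r) (m (r + 1)), f n := by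
  refine sum_biUnion fun r _ s _ hrs => ?_
  rw [Function.onFun, ← disjoint_coe, coe_Ico, coe_Ico]
  simpa using hm.pairwise_disjoint_on_Ico_succ hrs

lemma JSet.mono {B C : Set ℕ} (h : B ⊆ C) (hB : JSet B) : JSet C := fun F hF =>
  let ⟨a, H, hH, hmem⟩ := hB F hF
  ⟨a, H, hH, fun f hf => h (hmem f hf)⟩

lemma Nat.floor_add_eq_of_abs_sub_lt {x γ : ℝ} {k : ℕ} (h : |x - k| < min γ (1 - γ)) :
    ⌊x + γ⌋₊ = k := by
  obtain ⟨h₁, h₂⟩ := abs_lt.1 h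
  have := min_le_left γ (1 - γ)
  have := min_le_right γ (1 - γ)
  rw [Nat.floor_eq_iff (by linarith [k.cast_nonneg (α := ℝ)])]
  constructor <;> linarith

lemma round_eq_of_abs_sub_lt {x : ℝ} {n : ℤ} (h : |n - x| < 1 / 2) : round x = n := by
  obtain ⟨h₁, h₂⟩ := abs_lt.1 h
  exact round_eq_iff.2 ⟨by linarith, by linarith⟩

theorem JSet.image_of_abs_sub_lt {α δ : ℝ} (hα : 0 < α) (hδ : δ < 1 / 2) {B : Set ℕ}
    (hB : JSet B) {g : ℕ → ℕ} (hg : ∀ b ∈ B, |α * b - g b| < δ) : JSet (g '' B) := by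
  classical
  intro F hF
  obtain ⟨η, hη, hδη⟩ : ∃ η, 0 < η ∧ δ + η = 1 / 2 := ⟨1 / 2 - δ, by linarith, by ring⟩
  -- Choose blocks on which every `f ∈ F` sums to almost an integer multiple `N f r` of `α`.
  obtain ⟨m, hm, hnear⟩ := exists_strictMono_blockSum_near_nat F (inv_nonneg.2 hα.le)
    (ε := fun r => η / α / 2 / 2 ^ r) fun r => by positivity
  choose! N hN using hnear
  set w : (ℕ → ℕ) → ℕ → ℝ := fun f r => ∑ n ∈ Ico (m r) (m (r + 1)), (f n : ℝ)
  have hblock : ∀ f ∈ F, ∀ r, |α * N f r - w f r| < η / 2 / 2 ^ r := fun f hf r =>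
    calc |α * N f r - w f r| = α * |α⁻¹ * w f r - N f r| := by
          rw [abs_sub_comm, ← abs_of_pos hα, ← abs_mul, abs_of_pos hα, mul_sub,
            mul_inv_cancel_left₀ hα.ne']
      _ < α * (η / α / 2 / 2 ^ r) := by gcongr; exact hN f hf r
      _ = η / 2 / 2 ^ r := by field_simp
  obtain ⟨a', H, hH, hmem⟩ := hB (F.image N) (hF.image N)
  set b : (ℕ → ℕ) → ℕ := fun f => a' + ∑ r ∈ H, N f r
  set H' := H.biUnion fun r => Ico (m r) (m (r + 1))
  have herror : ∀ f ∈ F, |(g (b f) : ℝ) - ∑ n ∈ H', (f n : ℝ) - α * a'| < 1 / 2 := by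
    intro f hf
    have hsplit : (g (b f) : ℝ) - ∑ n ∈ H', (f n : ℝ) - α * a'
        = (g (b f) - α * b f) + ∑ r ∈ H, (α * N f r - w f r) := by
      simp only [b, H', w, sum_biUnion_Ico_succ hm.monotone, sum_sub_distrib,
        ← mul_sum]
      push_cast
      ring
    have hsum : |∑ r ∈ H, (α * N f r - w f r)| ≤ η :=
      calc |∑ r ∈ H, (α * N f r - w f r)| ≤ ∑ r ∈ H, η / 2 / 2 ^ r :=
            (abs_sum_le_sum_abs _ _).trans
              (sum_le_sum fun r _ => (hblock f hf r).le)
        _ ≤ η := (summable_geometric_two' η).sum_le_tsum H (fun _ _ => by positivity)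
            |>.trans_eq (tsum_geometric_two' η)
    rw [hsplit]
    calc _ ≤ |(g (b f) : ℝ) - α * b f| + |∑ r ∈ H, (α * N f r - w f r)| := abs_add_le _ _
      _ < δ + η := by
          have := hg (b f) (hmem _ (mem_image_of_mem N hf))
          rw [abs_sub_comm] at this
          linarith
      _ = 1 / 2 := hδη
  have hround : 0 ≤ round (α * a') := by
    rw [round_eq]
    exact Int.floor_nonneg.2 (by positivity)
  refine ⟨(round (α * a')).toNat, H', hH.biUnion fun r _ => nonempty_Ico.2 (hm r.lt_succ_self),
    fun f hf => ⟨b f, hmem _ (mem_image_of_mem N hf), ?_⟩⟩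
  have := round_eq_of_abs_sub_lt (n := g (b f) - ∑ n ∈ H', f n) (by push_cast; exact herror f hf)
  omega

lemma setOf_norm_mul_lt_mem_of_usum_self {p : Ultrafilter ℕ} (hp : usum p p = p) (α : ℝ)
    {δ : ℝ} (hδ : 0 < δ) : {b : ℕ | ‖((α * b : ℝ) : UnitAddCircle)‖ < δ} ∈ p := by
  have := tendsto_zero_of_usum_self (φ := fun n : ℕ => ((α * n : ℝ) : UnitAddCircle))
    (fun x y => by push_cast; rw [mul_add, AddCircle.coe_add]) hp (Metric.ball_mem_nhds 0 hδ)
  simp only [Filter.mem_map, Set.preimage, Metric.mem_ball, dist_zero_right] at this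
  exact this

lemma spectrumMap_eq_of_abs_sub_lt {α γ : ℝ} {b k : ℕ} (h : |α * b - k| < min γ (1 - γ)) :
    spectrumMap α γ b = k :=
  Nat.floor_add_eq_of_abs_sub_lt h

lemma spectrumMap_add_of_abs_sub_lt {α γ δ : ℝ} (hδ : δ + δ = min γ (1 - γ)) {x y : ℕ}
    (hx : |α * x - spectrumMap α γ x| < δ) (hy : |α * y - spectrumMap α γ y| < δ) :
    spectrumMap α γ (x + y) = spectrumMap α γ x + spectrumMap α γ y := by
  refine spectrumMap_eq_of_abs_sub_lt ?_
  calc _ = |(α * x - spectrumMap α γ x) + (α * y - spectrumMap α γ y)| := by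
        push_cast; ring_nf
    _ < min γ (1 - γ) := (abs_add_le _ _).trans_lt (hδ ▸ add_lt_add hx hy)

theorem spectra_of_C_sets (α γ : ℝ) (hα : 0 < α) (hγ0 : 0 < γ) (hγ1 : γ < 1)
    (A : Set ℕ) (hA : CSet A) :
    CSet (spectrumMap α γ '' A) := by
  obtain ⟨p, hp, hpJ, hpA⟩ := hA
  set g := spectrumMap α γ
  obtain ⟨δ, hδ0, hδ⟩ : ∃ δ, 0 < δ ∧ δ + δ = min γ (1 - γ) :=
    ⟨min γ (1 - γ) / 2, by have := lt_min hγ0 (sub_pos.2 hγ1); positivity, by ring⟩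
  set W := {b : ℕ | ‖((α * b : ℝ) : UnitAddCircle)‖ < δ}
  have hW : W ∈ p := setOf_norm_mul_lt_mem_of_usum_self hp α hδ0
  have hnear : ∀ b ∈ W, |α * b - g b| < δ := fun b hb => by
    obtain ⟨k, hk⟩ := exists_nat_abs_sub_lt_of_norm_lt (by positivity) hb
    rwa [show g b = k from spectrumMap_eq_of_abs_sub_lt (hk.trans (by linarith))]
  have hadd : ∀ x ∈ W, ∀ y ∈ W, g (x + y) = g x + g y := fun x hx y hy =>
    spectrumMap_add_of_abs_sub_lt hδ (hnear x hx) (hnear y hy)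
  have hδ_half : δ < 1 / 2 := by linarith [min_le_left γ (1 - γ)]
  refine ⟨p.map g, usum_map_self_of_add_eq hp hW hadd, fun C hC => ?_,
    Ultrafilter.mem_map.2 (mem_of_superset hpA (Set.subset_preimage_image g A))⟩
  exact (JSet.image_of_abs_sub_lt hα hδ_half (hpJ _ (inter_mem hC hW)) fun b hb => hnear b hb.2).mono
    ((Set.image_mono Set.inter_subset_left).trans (Set.image_preimage_subset g C))
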